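/- Let G be a strictly m-degenerate finite simple graph and (H, f) a valued cover of G with f(v,1) + f(v,2) + ⋯ + f(v,κ) ≥ m for every vertex v ∈ V(G). Then H has a strictly f-degenerate transversal. -/

import Mathlib

open SimpleGraph

universe u

/-- `H` is a cover of `G` with `κ` parts: every edge of `H` joins distinct fibres
`X_u`, `X_v` with `uv ∈ E(G)` (in particular each fibre is independent), and the
edges between two fibres form a (possibly empty) matching. -/
def IsCover {V : Type u} (κ : ℕ) (G : SimpleGraph V) (H : SimpleGraph (V × Fin κ)) : Prop :=
  (∀ (u v : V) (p q : Fin κ), H.Adj (u, p) (v, q) → G.Adj u v) ∧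
  (∀ (u v : V) (p q q' : Fin κ), H.Adj (u, p) (v, q) → H.Adj (u, p) (v, q') → q = q')

/-- The subgraph of `Γ` induced on `R` is strictly `f`-degenerate: every nonempty
subgraph with vertices inside `R` has a vertex whose degree there is `< f`. -/
def StrictlyFDegenerateOn {α : Type u} (Γ : SimpleGraph α) (f : α → ℕ) (R : Set α) : Prop :=
  ∀ S : Set α, S ⊆ R → S.Nonempty → ∃ x ∈ S, (S ∩ {y | Γ.Adj x y}).ncard < f x

/-- `R` is a transversal of a cover with fibres `X_v = {v} × Fin κ`. -/
def IsTransversal {V : Type u} {κ : ℕ} (R : Set (V × Fin κ)) : Prop :=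
  ∀ v : V, ∃! p : Fin κ, (v, p) ∈ R

/-- `H` has a strictly `f`-degenerate transversal. -/
def HasSFDTransversal {V : Type u} {κ : ℕ} (H : SimpleGraph (V × Fin κ))
    (f : V × Fin κ → ℕ) : Prop :=
  ∃ R : Set (V × Fin κ), IsTransversal R ∧ StrictlyFDegenerateOn H f R

/-!
Build the transversal greedily along a degeneracy order of `G`: remove a vertex `v` with fewer
than `m` neighbours among the remaining vertices and take, by induction, a strictly
`f`-degenerate transversal `R` over the rest. Because the edges between two fibres form a
matching and `R` meets each fibre at most once, the pairs `(p, y)` with `y ∈ R` adjacent to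
`(v, p)` project injectively to `G`-neighbours of `v`, so
`∑ p, |N(v, p) ∩ R| < m ≤ ∑ p, f (v, p)`. Hence some `(v, p)` has fewer than `f (v, p)`
neighbours in `R`, and adding it to `R` keeps it strictly `f`-degenerate.
-/

open Set

section Degenerate

variable {α : Type u} {Γ : SimpleGraph α} {f : α → ℕ} {R R' : Set α}

theorem strictlyFDegenerateOn_empty : StrictlyFDegenerateOn Γ f ∅ := fun _ hS hne =>
  absurd (subset_empty_iff.1 hS ▸ hne) Set.not_nonempty_empty

theorem StrictlyFDegenerateOn.mono (hR : StrictlyFDegenerateOn Γ f R) (h : R' ⊆ R) :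
    StrictlyFDegenerateOn Γ f R' := fun S hS => hR S (hS.trans h)

theorem StrictlyFDegenerateOn.insert (hR : StrictlyFDegenerateOn Γ f R) (hfin : R.Finite)
    {x : α} (hx : (R ∩ Γ.neighborSet x).ncard < f x) :
    StrictlyFDegenerateOn Γ f (insert x R) := by
  intro S hS hne
  by_cases hxS : x ∈ S
  · have hsub : S ∩ Γ.neighborSet x ⊆ R ∩ Γ.neighborSet x := fun y ⟨hyS, hxy⟩ =>
      ⟨(hS hyS).resolve_left hxy.ne', hxy⟩
    exact ⟨x, hxS, (ncard_le_ncard hsub (hfin.inter_of_left _)).trans_lt hx⟩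
  · exact hR S (fun y hy => (hS hy).resolve_left (ne_of_mem_of_not_mem hy hxS)) hne

end Degenerate

theorem isTransversal_of_injOn_fst {V : Type u} {κ : ℕ} {R : Set (V × Fin κ)}
    (hinj : InjOn Prod.fst R) (hfst : Prod.fst '' R = univ) : IsTransversal R := by
  intro v
  obtain ⟨⟨_, p⟩, hp, rfl⟩ := hfst.symm ▸ mem_univ v
  exact ⟨p, hp, fun q hq => congrArg Prod.snd (hinj hq hp rfl)⟩

namespace IsCover

variable {V : Type u} {κ : ℕ} {G : SimpleGraph V} {H : SimpleGraph (V × Fin κ)}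

theorem adj_fst (hH : IsCover κ G H) {x y : V × Fin κ} (h : H.Adj x y) : G.Adj x.1 y.1 :=
  hH.1 x.1 y.1 x.2 y.2 h

theorem eq_of_adj_of_adj (hH : IsCover κ G H) {x : V × Fin κ} {v : V} {p q : Fin κ}
    (hp : H.Adj x (v, p)) (hq : H.Adj x (v, q)) : p = q :=
  hH.2 x.1 v x.2 p q hp hq

theorem sum_ncard_inter_neighborSet_le [Finite V] (hH : IsCover κ G H) {R : Set (V × Fin κ)}
    (hR : InjOn Prod.fst R) (v : V) :
    ∑ p, (R ∩ H.neighborSet (v, p)).ncard ≤ (Prod.fst '' R ∩ G.neighborSet v).ncard := by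
  set A : Fin κ → Set (V × Fin κ) := fun p => R ∩ H.neighborSet (v, p)
  have hdisj : Pairwise fun p q => Disjoint (A p) (A q) := fun p q hpq =>
    disjoint_left.2 fun y hp hq => hpq (hH.eq_of_adj_of_adj hp.2.symm hq.2.symm)
  have hsub : Prod.fst '' ⋃ p, A p ⊆ Prod.fst '' R ∩ G.neighborSet v := by
    rintro _ ⟨y, hy, rfl⟩
    obtain ⟨p, hyR, hadj⟩ := mem_iUnion.1 hy
    exact ⟨mem_image_of_mem _ hyR, hH.adj_fst hadj⟩
  calc ∑ p, (A p).ncard = (⋃ p, A p).ncard := by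
        rw [ncard_iUnion_of_finite (fun _ => toFinite _) hdisj, finsum_eq_sum_of_fintype]
    _ = (Prod.fst '' ⋃ p, A p).ncard :=
        (hR.mono (iUnion_subset fun _ => inter_subset_left)).ncard_image.symm
    _ ≤ _ := ncard_le_ncard hsub (toFinite _)

theorem exists_strictlyFDegenerate_transversalOn [Finite V] (hH : IsCover κ G H) {m : ℕ}
    {f : V × Fin κ → ℕ} (hf : ∀ v : V, m ≤ ∑ q : Fin κ, f (v, q)) (T : Finset V)
    (hG : StrictlyFDegenerateOn G (fun _ => m) T) :
    ∃ R : Set (V × Fin κ), InjOn Prod.fst R ∧ Prod.fst '' R = T ∧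
      StrictlyFDegenerateOn H f R := by
  classical
  induction T using Finset.strongInduction with
  | H T ih =>
  rcases T.eq_empty_or_nonempty with rfl | hT
  · exact ⟨∅, injOn_empty _, by simp, strictlyFDegenerateOn_empty⟩
  obtain ⟨v, hvT, hv⟩ := hG T subset_rfl (Finset.coe_nonempty.2 hT)
  have hrest : (↑(T.erase v) : Set V) ⊆ T := Finset.coe_subset.2 (T.erase_subset v)
  obtain ⟨R, hRinj, hRfst, hRdeg⟩ := ih _ (Finset.erase_ssubset hvT) (hG.mono hrest)
  have hsum : ∑ p, (R ∩ H.neighborSet (v, p)).ncard < ∑ p, f (v, p) :=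
    calc ∑ p, (R ∩ H.neighborSet (v, p)).ncard
        ≤ (Prod.fst '' R ∩ G.neighborSet v).ncard := hH.sum_ncard_inter_neighborSet_le hRinj v
      _ ≤ (↑T ∩ G.neighborSet v).ncard :=
        ncard_le_ncard (inter_subset_inter_left _ (hRfst ▸ hrest)) (toFinite _)
      _ < m := hv
      _ ≤ ∑ p, f (v, p) := hf v
  obtain ⟨p, -, hp⟩ := Finset.exists_lt_of_sum_lt hsum
  have hvR : v ∉ Prod.fst '' R := by simp [hRfst]
  refine ⟨insert (v, p) R, ?_, ?_, hRdeg.insert (toFinite R) hp⟩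
  · exact (injOn_insert fun h => hvR ⟨_, h, rfl⟩).2 ⟨hRinj, hvR⟩
  · rw [image_insert_eq, hRfst, Finset.coe_erase, insert_sdiff_singleton,
      insert_eq_of_mem (Finset.mem_coe.2 hvT)]

end IsCover

/-- If `G` is strictly `m`-degenerate and `(H, f)` is a valued
cover of `G` with `∑ q f(v,q) ≥ m` for every vertex `v`, then `H` has a strictly
`f`-degenerate transversal. -/
theorem hasSFDTransversal_of_strictlyDegenerate
    {V : Type} [Fintype V] (G : SimpleGraph V) (m : ℕ)
    (hG : StrictlyFDegenerateOn G (fun _ => m) Set.univ) (κ : ℕ)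
    (H : SimpleGraph (V × Fin κ)) (hH : IsCover κ G H) (f : V × Fin κ → ℕ)
    (hf : ∀ v : V, m ≤ ∑ q : Fin κ, f (v, q)) :
    HasSFDTransversal H f := by
  obtain ⟨R, hinj, hfst, hdeg⟩ :=
    hH.exists_strictlyFDegenerate_transversalOn hf Finset.univ (by rwa [Finset.coe_univ])
  exact ⟨R, isTransversal_of_injOn_fst hinj (by rwa [Finset.coe_univ] at hfst), hdeg⟩
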